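/- (Exponential bound on the second-kind error.) For every real a and every n ≥ 1, the test S̄_n(a) = {E_{σ_n}(ρ_n) − e^{na} σ_n > 0} satisfies β_n(S̄_n(a)) = Tr[σ_n S̄_n(a)] ≤ e^{−na}. -/

import Mathlib

open Matrix Filter
open scoped ComplexOrder

noncomputable section

/-- Functional calculus for a Hermitian matrix: apply `f` to the eigenvalues. -/
def matFun {m : Type*} [Fintype m] [DecidableEq m] (f : ℝ → ℝ) (A : Matrix m m ℂ) :
    Matrix m m ℂ :=
  if hA : A.IsHermitian then
    (hA.eigenvectorUnitary : Matrix m m ℂ) *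
      Matrix.diagonal (fun i => (f (hA.eigenvalues i) : ℂ)) *
      star (hA.eigenvectorUnitary : Matrix m m ℂ)
  else 0

/-- Matrix logarithm (via functional calculus). -/
def matLog {m : Type*} [Fintype m] [DecidableEq m] (A : Matrix m m ℂ) : Matrix m m ℂ :=
  matFun Real.log A

/-- Real matrix power (via functional calculus). -/
def matRPow {m : Type*} [Fintype m] [DecidableEq m] (A : Matrix m m ℂ) (s : ℝ) :
    Matrix m m ℂ :=
  matFun (fun x => x ^ s) A

open Classical in
/-- The finite set of (distinct, real) eigenvalues of a Hermitian matrix. -/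
def eigFinset {m : Type*} [Fintype m] [DecidableEq m] (A : Matrix m m ℂ) : Finset ℝ :=
  if hA : A.IsHermitian then Finset.image hA.eigenvalues Finset.univ else ∅

/-- `v A`: the number of distinct eigenvalues of a Hermitian matrix `A`. -/
def numEig {m : Type*} [Fintype m] [DecidableEq m] (A : Matrix m m ℂ) : ℕ :=
  (eigFinset A).card

/-- The spectral projection of a Hermitian matrix `A` corresponding to eigenvalue `μ`. -/
def specProj {m : Type*} [Fintype m] [DecidableEq m] (A : Matrix m m ℂ) (μ : ℝ) :
    Matrix m m ℂ :=
  matFun (fun x => if x = μ then 1 else 0) A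

/-- The pinching `E_A(B) = Σ_i E_i B E_i` of `B` by the Hermitian matrix `A`. -/
def pinch {m : Type*} [Fintype m] [DecidableEq m] (A B : Matrix m m ℂ) : Matrix m m ℂ :=
  ∑ μ ∈ eigFinset A, specProj A μ * B * specProj A μ

/-- `{X > 0}`: the projection onto the strictly positive eigenspaces of a Hermitian `X`. -/
def posProj {m : Type*} [Fintype m] [DecidableEq m] (X : Matrix m m ℂ) : Matrix m m ℂ :=
  matFun (fun x => if 0 < x then 1 else 0) X

/-- The `n`-fold tensor (Kronecker) power of a `d × d` matrix, realized on the index type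
`Fin n → Fin d`. -/
def tensorPow {d : ℕ} (ρ : Matrix (Fin d) (Fin d) ℂ) (n : ℕ) :
    Matrix (Fin n → Fin d) (Fin n → Fin d) ℂ :=
  fun x y => ∏ i, ρ (x i) (y i)

/-- A density matrix: positive semidefinite with unit trace. -/
def IsDensity {m : Type*} [Fintype m] [DecidableEq m] (ρ : Matrix m m ℂ) : Prop :=
  ρ.PosSemidef ∧ ρ.trace = 1

/-- A test: an operator `A` with `0 ≤ A ≤ I` in the Loewner order. -/
def IsTest {m : Type*} [Fintype m] [DecidableEq m] (A : Matrix m m ℂ) : Prop :=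
  A.PosSemidef ∧ (1 - A).PosSemidef

/-- The quantum relative entropy `D(ρ‖σ) = Tr[ρ (log ρ − log σ)]`. -/
def relEnt {m : Type*} [Fintype m] [DecidableEq m] (ρ σ : Matrix m m ℂ) : ℝ :=
  ((ρ * (matLog ρ - matLog σ)).trace).re

/-- The error probability of the first kind, `α_n(A) = Tr[ρ_n (I − A)]`. -/
def alphaErr {d : ℕ} (ρ : Matrix (Fin d) (Fin d) ℂ) (n : ℕ)
    (A : Matrix (Fin n → Fin d) (Fin n → Fin d) ℂ) : ℝ :=
  ((tensorPow ρ n * (1 - A)).trace).re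

/-- The error probability of the second kind, `β_n(A) = Tr[σ_n A]`. -/
def betaErr {d : ℕ} (σ : Matrix (Fin d) (Fin d) ℂ) (n : ℕ)
    (A : Matrix (Fin n → Fin d) (Fin n → Fin d) ℂ) : ℝ :=
  ((tensorPow σ n * A).trace).re

/-- `β*_n(ε)`: the minimum type-II error among tests with type-I error at most `ε`. -/
def betaStar {d : ℕ} (ρ σ : Matrix (Fin d) (Fin d) ℂ) (n : ℕ) (ε : ℝ) : ℝ :=
  sInf {b : ℝ | ∃ A : Matrix (Fin n → Fin d) (Fin n → Fin d) ℂ,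
    IsTest A ∧ alphaErr ρ n A ≤ ε ∧ b = betaErr σ n A}

/-! Pinching by `σ_n` preserves positivity and trace, so `P = E_{σ_n}(ρ_n)` is a density matrix.
With `c = e^{na}`, `X = P - c σ_n` and `S = {X > 0}` we have `Tr[X S] ≥ 0` and `S ≤ 1`, hence
`c Tr[σ_n S] = Tr[P S] - Tr[X S] ≤ Tr[P] = 1`. -/

section FunctionalCalculus

variable {m : Type*} [Fintype m] [DecidableEq m] {A : Matrix m m ℂ}

lemma matFun_of_isHermitian (hA : A.IsHermitian) (f : ℝ → ℝ) :
    matFun f A = (hA.eigenvectorUnitary : Matrix m m ℂ) *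
      diagonal (fun i => (f (hA.eigenvalues i) : ℂ)) *
      star (hA.eigenvectorUnitary : Matrix m m ℂ) :=
  dif_pos hA

lemma matFun_congr (hA : A.IsHermitian) {f g : ℝ → ℝ}
    (hfg : ∀ i, f (hA.eigenvalues i) = g (hA.eigenvalues i)) : matFun f A = matFun g A := by
  simp only [matFun_of_isHermitian hA, hfg]

lemma matFun_mul (hA : A.IsHermitian) (f g : ℝ → ℝ) :
    matFun f A * matFun g A = matFun (fun x => f x * g x) A := by
  simp only [matFun_of_isHermitian hA, Matrix.mul_assoc]
  rw [← Matrix.mul_assoc (star _), Unitary.coe_star_mul_self, Matrix.one_mul,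
    ← Matrix.mul_assoc (diagonal _), diagonal_mul_diagonal]
  push_cast
  rfl

lemma matFun_sum (hA : A.IsHermitian) {ι : Type*} (s : Finset ι) (f : ι → ℝ → ℝ) :
    ∑ j ∈ s, matFun (f j) A = matFun (fun x => ∑ j ∈ s, f j x) A := by
  simp only [matFun_of_isHermitian hA, ← Finset.sum_mul, ← Finset.mul_sum, Complex.ofReal_sum]
  congr 2
  ext i k
  by_cases h : i = k <;> simp [Matrix.sum_apply, h]

lemma matFun_sub (hA : A.IsHermitian) (f g : ℝ → ℝ) :
    matFun f A - matFun g A = matFun (fun x => f x - g x) A := by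
  simp only [matFun_of_isHermitian hA, ← Matrix.sub_mul, ← Matrix.mul_sub, diagonal_sub,
    Complex.ofReal_sub]

lemma matFun_id (hA : A.IsHermitian) : matFun id A = A := by
  rw [matFun_of_isHermitian hA]
  conv_rhs => rw [hA.spectral_theorem]
  rfl

lemma matFun_one (hA : A.IsHermitian) : matFun 1 A = 1 := by
  simp [matFun_of_isHermitian hA]

lemma trace_matFun (hA : A.IsHermitian) (f : ℝ → ℝ) :
    (matFun f A).trace = ∑ i, (f (hA.eigenvalues i) : ℂ) := by
  rw [matFun_of_isHermitian hA, trace_mul_cycle, Unitary.coe_star_mul_self, Matrix.one_mul,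
    trace_diagonal]

lemma posSemidef_matFun (hA : A.IsHermitian) {f : ℝ → ℝ} (hf : ∀ x, 0 ≤ f x) :
    (matFun f A).PosSemidef := by
  have hD : (diagonal fun i => (f (hA.eigenvalues i) : ℂ)).PosSemidef :=
    posSemidef_diagonal_iff.mpr fun i => Complex.zero_le_real.mpr (hf _)
  simpa [matFun_of_isHermitian hA, star_eq_conjTranspose] using
    hD.mul_mul_conjTranspose_same (hA.eigenvectorUnitary : Matrix m m ℂ)

end FunctionalCalculus

section Pinching

variable {m : Type*} [Fintype m] [DecidableEq m] {A : Matrix m m ℂ}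

lemma posSemidef_specProj (hA : A.IsHermitian) (μ : ℝ) : (specProj A μ).PosSemidef :=
  posSemidef_matFun hA fun x => by split_ifs <;> norm_num

lemma specProj_mul_self (hA : A.IsHermitian) (μ : ℝ) :
    specProj A μ * specProj A μ = specProj A μ := by
  rw [specProj, matFun_mul hA]
  exact matFun_congr hA fun i => by split_ifs <;> norm_num

lemma sum_specProj (hA : A.IsHermitian) : ∑ μ ∈ eigFinset A, specProj A μ = 1 := by
  rw [← matFun_one hA]
  refine (matFun_sum hA _ _).trans (matFun_congr hA fun i => ?_)
  rw [Finset.sum_ite_eq, if_pos]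
  · rfl
  · simp [eigFinset, hA]

lemma posSemidef_pinch (hA : A.IsHermitian) {B : Matrix m m ℂ} (hB : B.PosSemidef) :
    (pinch A B).PosSemidef :=
  posSemidef_sum _ fun μ _ => by
    simpa [(posSemidef_specProj hA μ).1.eq] using hB.mul_mul_conjTranspose_same (specProj A μ)

lemma trace_pinch (hA : A.IsHermitian) (B : Matrix m m ℂ) : (pinch A B).trace = B.trace := by
  have hcycle : ∀ μ, (specProj A μ * B * specProj A μ).trace = (specProj A μ * B).trace := by
    intro μ
    rw [trace_mul_cycle, specProj_mul_self hA]
  rw [pinch, trace_sum, Finset.sum_congr rfl fun μ _ => hcycle μ, ← trace_sum, ← Finset.sum_mul,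
    sum_specProj hA, Matrix.one_mul]

end Pinching

section TensorPower

variable {d : ℕ}

lemma tensorPow_mul_tensorPow (A B : Matrix (Fin d) (Fin d) ℂ) (n : ℕ) :
    tensorPow A n * tensorPow B n = tensorPow (A * B) n := by
  ext x y
  simp only [tensorPow, mul_apply]
  rw [Finset.prod_univ_sum, Fintype.piFinset_univ]
  exact Finset.sum_congr rfl fun z _ => Finset.prod_mul_distrib.symm

lemma conjTranspose_tensorPow (A : Matrix (Fin d) (Fin d) ℂ) (n : ℕ) :
    (tensorPow A n)ᴴ = tensorPow Aᴴ n := by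
  ext x y
  simp [tensorPow, star_prod]

lemma trace_tensorPow (A : Matrix (Fin d) (Fin d) ℂ) (n : ℕ) :
    (tensorPow A n).trace = A.trace ^ n := by
  rw [trace, trace, ← Fin.prod_const, Finset.prod_univ_sum, Fintype.piFinset_univ]
  rfl

open scoped MatrixOrder in
lemma posSemidef_tensorPow {A : Matrix (Fin d) (Fin d) ℂ} (hA : A.PosSemidef) (n : ℕ) :
    (tensorPow A n).PosSemidef := by
  obtain ⟨B, rfl⟩ := CStarAlgebra.nonneg_iff_eq_star_mul_self.mp hA.nonneg
  rw [star_eq_conjTranspose, ← tensorPow_mul_tensorPow, ← conjTranspose_tensorPow]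
  exact posSemidef_conjTranspose_mul_self _

end TensorPower

section TraceInequalities

variable {m : Type*} [Fintype m] [DecidableEq m]

open scoped MatrixOrder in
lemma trace_mul_nonneg {A B : Matrix m m ℂ} (hA : A.PosSemidef) (hB : B.PosSemidef) :
    0 ≤ (A * B).trace := by
  obtain ⟨D, rfl⟩ := CStarAlgebra.nonneg_iff_eq_star_mul_self.mp hB.nonneg
  rw [← Matrix.mul_assoc, trace_mul_comm, ← Matrix.mul_assoc, star_eq_conjTranspose]
  exact (hA.mul_mul_conjTranspose_same D).trace_nonneg

lemma re_trace_mul_le_re_trace {A T : Matrix m m ℂ} (hA : A.PosSemidef)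
    (hT : (1 - T).PosSemidef) : (A * T).trace.re ≤ A.trace.re := by
  have h := (Complex.nonneg_iff.mp (trace_mul_nonneg hA hT)).1
  rw [Matrix.mul_sub, Matrix.mul_one, trace_sub, Complex.sub_re] at h
  linarith

end TraceInequalities

section PositiveProjection

variable {m : Type*} [Fintype m] [DecidableEq m] {X : Matrix m m ℂ}

lemma posSemidef_one_sub_posProj (hX : X.IsHermitian) : (1 - posProj X).PosSemidef := by
  rw [posProj, ← matFun_one hX, matFun_sub hX]
  exact posSemidef_matFun hX fun x => by split_ifs <;> norm_num

lemma re_trace_mul_posProj_nonneg (hX : X.IsHermitian) : 0 ≤ (X * posProj X).trace.re := by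
  nth_rewrite 1 [← matFun_id hX]
  rw [posProj, matFun_mul hX, trace_matFun hX, ← Complex.ofReal_sum, Complex.ofReal_re]
  refine Finset.sum_nonneg fun i _ => ?_
  split_ifs with h
  · simpa using h.le
  · simp

lemma mul_re_trace_mul_posProj_sub_smul_le {τ σ : Matrix m m ℂ} (hτ : τ.PosSemidef)
    (hσ : σ.IsHermitian) (c : ℝ) :
    c * (σ * posProj (τ - (c : ℂ) • σ)).trace.re ≤ τ.trace.re := by
  set X := τ - (c : ℂ) • σ
  have hX : X.IsHermitian := hτ.1.sub (hσ.smul (Complex.conj_ofReal c))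
  have hsplit : (c : ℂ) • σ * posProj X = τ * posProj X - X * posProj X := by
    rw [← Matrix.sub_mul, sub_sub_cancel]
  have h := congrArg (fun M => M.trace.re) hsplit
  simp only [smul_mul_assoc, trace_smul, trace_sub, Complex.sub_re, smul_eq_mul,
    Complex.re_ofReal_mul] at h
  linarith [re_trace_mul_le_re_trace hτ (posSemidef_one_sub_posProj hX),
    re_trace_mul_posProj_nonneg hX]

end PositiveProjection

theorem beta_exponential_bound_general {d : ℕ} (ρ σ : Matrix (Fin d) (Fin d) ℂ)
    (hρ : IsDensity ρ) (hσ : IsDensity σ) (a : ℝ) (n : ℕ) :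
    betaErr σ n (posProj (pinch (tensorPow σ n) (tensorPow ρ n)
        - (Real.exp (n * a) : ℂ) • tensorPow σ n))
      ≤ Real.exp (-((n : ℝ) * a)) := by
  have hσn : (tensorPow σ n).IsHermitian := (posSemidef_tensorPow hσ.1 n).1
  have hP : (pinch (tensorPow σ n) (tensorPow ρ n)).PosSemidef :=
    posSemidef_pinch hσn (posSemidef_tensorPow hρ.1 n)
  have htrace : (pinch (tensorPow σ n) (tensorPow ρ n)).trace = 1 := by
    rw [trace_pinch hσn, trace_tensorPow, hρ.2, one_pow]
  have hkey := mul_re_trace_mul_posProj_sub_smul_le hP hσn (Real.exp (n * a))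
  rw [htrace, Complex.one_re] at hkey
  rw [Real.exp_neg, inv_eq_one_div]
  exact (le_div_iff₀' (Real.exp_pos _)).mpr hkey

/-- **Exponential bound on the second-kind error** of the test
`S̄_n(a) = {E_{σ_n}(ρ_n) − e^{na} σ_n > 0}`: `β_n(S̄_n(a)) ≤ e^{−na}`. -/
theorem beta_exponential_bound {d : ℕ} (hd : 0 < d) (ρ σ : Matrix (Fin d) (Fin d) ℂ)
    (hρ : IsDensity ρ) (hσ : IsDensity σ) (a : ℝ) (n : ℕ) (hn : 1 ≤ n) :
    betaErr σ n (posProj (pinch (tensorPow σ n) (tensorPow ρ n)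
        - (Real.exp (n * a) : ℂ) • tensorPow σ n))
      ≤ Real.exp (-((n : ℝ) * a)) :=
  beta_exponential_bound_general ρ σ hρ hσ a n

end
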